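/- Let λ ∈ ℂ with Im λ > 0, and consider the factor E(x) = exp((4/5) i (x+λ)^{5/4}) for x ≥ X > 0 (principal branch). Then |E(x)| = exp(-Re(i·(4/5)(x+λ)^{5/4})) decays like exp(-(Im λ) x^{1/4}) up to a factor 1 + O(x^{-3/4}); in particular E ∈ L²(X, ∞). -/

import Mathlib

/-!
Factoring `x + λ = x (1 + λ/x)` and expanding `(1 + w)^{5/4}` to second order at `w = 0` gives
`(4/5) Im (x+λ)^{5/4} = Im λ · x^{1/4} + O(x^{-3/4})`, so
`|E(x)| = exp(-Im λ · x^{1/4}) · exp(O(x^{-3/4}))`: this is the ratio estimate, and it makes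
`|E|²` eventually comparable to `exp(-2 Im λ · x^{1/4})`, which is integrable at infinity.
Since `Im (x+λ) ≠ 0`, `x + λ` stays off the branch cut, so `E` is continuous and hence locally
square-integrable.
-/

open Filter MeasureTheory Asymptotics Topology

theorem AnalyticAt.isBigO_sub_sub_smul_deriv {𝕜 E : Type*} [NontriviallyNormedField 𝕜]
    [NormedAddCommGroup E] [NormedSpace 𝕜 E] {f : 𝕜 → E} {z : 𝕜} (hf : AnalyticAt 𝕜 f z) :
    (fun w => f (z + w) - f z - w • deriv f z) =O[𝓝 0] fun w => ‖w‖ ^ 2 := by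
  obtain ⟨p, hp⟩ := hf
  have h0 : p.coeff 0 = f z := by simpa using hp.coeff_zero (fun _ => 0)
  have h1 : p.coeff 1 = deriv f z := hp.deriv.symm
  refine (hp.isBigO_sub_partialSum_pow 2).congr_left fun w => ?_
  simp only [FormalMultilinearSeries.partialSum, FormalMultilinearSeries.apply_eq_prod_smul_coeff,
    Finset.prod_const, Finset.card_univ, Fintype.card_fin, Finset.sum_range_succ, Finset.range_one,
    Finset.sum_singleton, pow_zero, h0, one_smul, pow_one, h1]
  abel

theorem Complex.isBigO_one_add_cpow_sub (a : ℂ) :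
    (fun w : ℂ => (1 + w) ^ a - 1 - a * w) =O[𝓝 0] fun w => ‖w‖ ^ 2 := by
  have hslit : (1 : ℂ) ∈ slitPlane := one_mem_slitPlane
  have ha : AnalyticAt ℂ (fun w : ℂ => w ^ a) 1 := analyticAt_id.cpow analyticAt_const hslit
  have h := ha.isBigO_sub_sub_smul_deriv
  simpa [(hasStrictDerivAt_cpow_const hslit).hasDerivAt.deriv, mul_comm] using h

theorem Complex.ofReal_mul_cpow {x : ℝ} (hx : 0 < x) (w a : ℂ) :
    ((x : ℂ) * w) ^ a = (x : ℂ) ^ a * w ^ a := by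
  rcases eq_or_ne w 0 with rfl | hw
  · rcases eq_or_ne a 0 with rfl | ha <;> simp [*]
  · have hx' : (x : ℂ) ≠ 0 := by exact_mod_cast hx.ne'
    rw [cpow_def_of_ne_zero (mul_ne_zero hx' hw), cpow_def_of_ne_zero hx', cpow_def_of_ne_zero hw,
      log_ofReal_mul hx hw, ofReal_log hx.le, add_mul, exp_add]

theorem Complex.isBigO_ofReal_add_cpow_sub (z : ℂ) (a : ℝ) :
    (fun x : ℝ => ((x : ℂ) + z) ^ (a : ℂ) - (x : ℂ) ^ (a : ℂ) - a * z * (x : ℂ) ^ ((a : ℂ) - 1))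
      =O[atTop] fun x => x ^ (a - 2) := by
  have hz : Tendsto (fun x : ℝ => z / x) atTop (𝓝 0) := by
    simpa [div_eq_mul_inv] using tendsto_inv_atTop_zero.ofReal.const_mul z
  have h := (isBigO_refl (fun x : ℝ => (x : ℂ) ^ (a : ℂ)) atTop).norm_right.mul
    ((isBigO_one_add_cpow_sub a).comp_tendsto hz)
  refine (h.congr' ?_ ?_).trans (isBigO_const_mul_self (‖z‖ ^ 2) _ _)
  · filter_upwards [eventually_gt_atTop 0] with x hx
    have hx' : (x : ℂ) ≠ 0 := by exact_mod_cast hx.ne'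
    have hsplit : (x : ℂ) + z = x * (1 + z / x) := by field_simp
    simp only [Function.comp_apply]
    rw [hsplit, ofReal_mul_cpow hx, cpow_sub _ _ hx', cpow_one]
    field_simp
  · filter_upwards [eventually_gt_atTop 0] with x hx
    simp only [Function.comp_apply]
    rw [norm_cpow_eq_rpow_re_of_pos hx, ofReal_re, norm_div, norm_real, Real.norm_of_nonneg hx.le,
      Real.rpow_sub hx, Real.rpow_two]
    field_simp

theorem Real.isBigO_exp_neg_sub_one {α : Type*} {l : Filter α} {f : α → ℝ}
    (hf : Tendsto f l (𝓝 0)) : (fun x => Real.exp (-f x) - 1) =O[l] f := by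
  have h := (Real.hasDerivAt_exp 0).isBigO_sub.comp_tendsto (neg_zero (G := ℝ) ▸ hf.neg)
  simpa [Function.comp_def] using h

theorem integrableAtFilter_exp_neg_mul_rpow {b p : ℝ} (hb : 0 < b) (hp : 0 < p) :
    IntegrableAtFilter (fun x => Real.exp (-b * x ^ p)) atTop :=
  ⟨Set.Ioi 0, Ioi_mem_atTop 0,
    by simpa using integrableOn_rpow_mul_exp_neg_mul_rpow (s := 0) (by norm_num) hp hb⟩

theorem memLp_two_restrict_Ioi_of_isBigO_exp_neg_mul_rpow {E : Type*} [NormedAddCommGroup E]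
    {f : ℝ → E} (hf : Continuous f) {b p : ℝ} (hb : 0 < b) (hp : 0 < p)
    (hO : f =O[atTop] fun x => Real.exp (-b * x ^ p)) (X : ℝ) :
    MemLp f 2 (volume.restrict (Set.Ioi X)) := by
  rw [memLp_two_iff_integrable_sq_norm hf.aestronglyMeasurable]
  have hO2 : (fun x => ‖f x‖ ^ 2) =O[atTop] fun x => Real.exp (-(2 * b) * x ^ p) :=
    (hO.norm_left.pow 2).congr_right fun x => by rw [← Real.exp_nat_mul]; ring_nf
  exact ((hf.norm.pow 2).locallyIntegrable.locallyIntegrableOn _).integrableOn_of_isBigO_atTop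
    hO2 (integrableAtFilter_exp_neg_mul_rpow (by positivity) hp) |>.mono_set Set.Ioi_subset_Ici_self

noncomputable def expPhase (lam : ℂ) (x : ℝ) : ℂ :=
  Complex.exp ((4 / 5) * Complex.I * ((x : ℂ) + lam) ^ ((5 : ℂ) / 4))

noncomputable def decayDefect (lam : ℂ) (x : ℝ) : ℝ :=
  (4 / 5) * (((x : ℂ) + lam) ^ ((5 : ℂ) / 4)).im - lam.im * x ^ ((1 : ℝ) / 4)

theorem norm_expPhase (lam : ℂ) (x : ℝ) :
    ‖expPhase lam x‖ = Real.exp (-lam.im * x ^ ((1 : ℝ) / 4)) * Real.exp (-decayDefect lam x) := by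
  have hre (w : ℂ) : ((4 / 5) * Complex.I * w).re = -(4 / 5) * w.im := by simp [Complex.mul_re]
  rw [expPhase, Complex.norm_exp, ← Real.exp_add, decayDefect, hre]
  congr 1
  ring

theorem isBigO_decayDefect (lam : ℂ) :
    decayDefect lam =O[atTop] fun x : ℝ => x ^ (-(3 : ℝ) / 4) := by
  have h := (Complex.imCLM.isBigO_comp _ _).trans (Complex.isBigO_ofReal_add_cpow_sub lam (5 / 4))
  refine (h.const_mul_left (4 / 5)).congr' ?_ ?_
  · filter_upwards [eventually_gt_atTop 0] with x hx
    rw [Complex.imCLM_apply, decayDefect, ← Complex.ofReal_cpow hx.le, ← Complex.ofReal_one,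
      ← Complex.ofReal_sub, ← Complex.ofReal_cpow hx.le]
    simp only [Complex.sub_im, Complex.mul_im, Complex.ofReal_im, Complex.ofReal_re]
    norm_num
    ring
  · filter_upwards with x
    norm_num

theorem tendsto_decayDefect (lam : ℂ) : Tendsto (decayDefect lam) atTop (𝓝 0) :=
  (isBigO_decayDefect lam).trans_tendsto <| by
    simpa [neg_div] using tendsto_rpow_neg_atTop (y := 3 / 4) (by norm_num)

theorem continuous_expPhase {lam : ℂ} (hlam : 0 < lam.im) : Continuous (expPhase lam) := by
  refine Complex.continuous_exp.comp (continuous_const.mul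
    ((Complex.continuous_ofReal.add continuous_const).cpow continuous_const fun x => ?_))
  simp [Complex.mem_slitPlane_iff, hlam.ne']

theorem isBigO_expPhase (lam : ℂ) :
    expPhase lam =O[atTop] fun x => Real.exp (-lam.im * x ^ ((1 : ℝ) / 4)) := by
  have hlim : Tendsto (fun x => Real.exp (-decayDefect lam x)) atTop (𝓝 1) := by
    simpa using (tendsto_decayDefect lam).neg.rexp
  refine isBigO_norm_left.mp ?_
  simpa only [norm_expPhase, mul_one] using (isBigO_refl _ atTop).mul (hlim.isBigO_one ℝ)

theorem stmt_15_general (lam : ℂ) (hlam : 0 < lam.im) (X : ℝ) :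
    ((fun x : ℝ =>
        ‖Complex.exp ((4 / 5) * Complex.I * ((x : ℂ) + lam) ^ ((5 : ℂ) / 4))‖
          / Real.exp (-(lam.im) * x ^ ((1 : ℝ) / 4)) - 1)
      =O[atTop] fun x : ℝ => x ^ (-(3 : ℝ) / 4)) ∧
    MemLp (fun x : ℝ => Complex.exp ((4 / 5) * Complex.I * ((x : ℂ) + lam) ^ ((5 : ℂ) / 4)))
      2 (MeasureTheory.volume.restrict (Set.Ioi X)) := by
  refine ⟨?_, memLp_two_restrict_Ioi_of_isBigO_exp_neg_mul_rpow (continuous_expPhase hlam) hlam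
    (by norm_num) (isBigO_expPhase lam) X⟩
  refine (Real.isBigO_exp_neg_sub_one (tendsto_decayDefect lam)).trans (isBigO_decayDefect lam)
    |>.congr_left fun x => ?_
  rw [← expPhase, norm_expPhase, mul_div_cancel_left₀ _ (Real.exp_pos _).ne']

/-- For `Im λ > 0` and `E(x) = exp((4/5) i (x+λ)^{5/4})` (principal branch):
`|E(x)| / exp(-(Im λ) x^{1/4}) = 1 + O(x^{-3/4})` as `x → ∞`, and `E ∈ L²(X,∞)`. -/
theorem stmt_15 (lam : ℂ) (hlam : 0 < lam.im) (X : ℝ) (hX : 0 < X) :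
    ((fun x : ℝ =>
        ‖Complex.exp ((4 / 5) * Complex.I * ((x : ℂ) + lam) ^ ((5 : ℂ) / 4))‖
          / Real.exp (-(lam.im) * x ^ ((1 : ℝ) / 4)) - 1)
      =O[atTop] fun x : ℝ => x ^ (-(3 : ℝ) / 4)) ∧
    MemLp (fun x : ℝ => Complex.exp ((4 / 5) * Complex.I * ((x : ℂ) + lam) ^ ((5 : ℂ) / 4)))
      2 (MeasureTheory.volume.restrict (Set.Ioi X)) :=
  stmt_15_general lam hlam X
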